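/- There is no Borel probability measure F on ℝ whose Gaussian-smoothed log-density satisfies ∫ φ(y−t)·log(f(y;F)) dy = K for a constant K and all t ∈ ℝ, where f(y;F) = ∫ φ(y−s) dF(s) and F is supported on a bounded interval [−A, A]. -/

import Mathlib

/-!
Since `F` lives on `[-A, A]`, the output density `f = φ ⋆ F` is squeezed between Gaussians:
`φ (|y| + A) ≤ f y ≤ φ 0`, and `f y ≤ φ (y - A)` for `y ≥ A`. The lower bound makes
`φ (· - t) * log f` integrable. The tail bound gives `log f y ≤ log (φ 0) - (t - A) ^ 2 / 2` on the
half-line `y ≥ t`, which carries half of the mass of `φ (· - t)`, so for `t ≥ A` the smoothed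
log-density is at most `log (φ 0) - (t - A) ^ 2 / 4`, which tends to `-∞` as `t → ∞`.
-/

open MeasureTheory Real Set

/-- The standard Gaussian density. -/
noncomputable def φ (x : ℝ) : ℝ := (Real.sqrt (2 * π))⁻¹ * Real.exp (-x ^ 2 / 2)

lemma φ_eq_mul_exp (x : ℝ) : φ x = (√(2 * π))⁻¹ * exp (-(1 / 2) * x ^ 2) := by
  rw [φ, neg_div, div_eq_inv_mul, neg_mul, one_div]

lemma φ_pos (x : ℝ) : 0 < φ x := by unfold φ; positivity

@[fun_prop]
lemma continuous_φ : Continuous φ := by unfold φ; fun_prop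

lemma φ_le_φ_of_abs_le {x y : ℝ} (h : |x| ≤ |y|) : φ y ≤ φ x := by
  have : -y ^ 2 / 2 ≤ -x ^ 2 / 2 := by nlinarith [sq_le_sq.2 h]
  unfold φ
  gcongr

lemma φ_le_φ_zero (x : ℝ) : φ x ≤ φ 0 := φ_le_φ_of_abs_le (by simp)

lemma log_φ (x : ℝ) : log (φ x) = log (φ 0) - x ^ 2 / 2 := by
  simp only [φ]
  rw [log_mul (by positivity) (exp_ne_zero _), log_mul (by positivity) (exp_ne_zero _),
    log_exp, log_exp]
  ring

lemma integrable_φ : Integrable φ := by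
  rw [funext φ_eq_mul_exp]
  exact (integrable_exp_neg_mul_sq (by norm_num)).const_mul _

lemma integral_φ : ∫ x, φ x = 1 := by
  simp only [φ_eq_mul_exp, integral_const_mul, integral_gaussian]
  rw [show π / (1 / 2) = 2 * π by ring]
  exact inv_mul_cancel₀ (by positivity)

lemma setIntegral_Ioi_zero_φ : ∫ x in Ioi 0, φ x = 1 / 2 := by
  simp only [φ_eq_mul_exp, integral_const_mul, integral_gaussian_Ioi]
  rw [show π / (1 / 2) = 2 * π by ring]
  field_simp

lemma integrable_φ_mul_sq_add (c : ℝ) : Integrable fun x ↦ φ x * (x ^ 2 + c) := by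
  have hsq : Integrable fun x : ℝ ↦ x ^ (2 : ℝ) * exp (-(1 / 2) * x ^ 2) :=
    integrable_rpow_mul_exp_neg_mul_sq (by norm_num) (by norm_num)
  refine ((hsq.const_mul (√(2 * π))⁻¹).add (integrable_φ.mul_const c)).congr
    (Filter.Eventually.of_forall fun x ↦ ?_)
  simp only [Pi.add_apply, φ_eq_mul_exp, rpow_two]
  ring

noncomputable def outputDensity (F : Measure ℝ) (y : ℝ) : ℝ := ∫ s, φ (y - s) ∂F

section outputDensity

variable {F : Measure ℝ} {A : ℝ}

lemma integrable_φ_sub [IsFiniteMeasure F] (y : ℝ) : Integrable (fun s ↦ φ (y - s)) F :=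
  (integrable_const (φ 0)).mono' (by fun_prop) <|
    .of_forall fun s ↦ by rw [norm_of_nonneg (φ_pos _).le]; exact φ_le_φ_zero _

lemma continuous_outputDensity [IsFiniteMeasure F] : Continuous (outputDensity F) :=
  continuous_of_dominated (fun _ ↦ by fun_prop)
    (fun _ ↦ .of_forall fun _ ↦ by rw [norm_of_nonneg (φ_pos _).le]; exact φ_le_φ_zero _)
    (integrable_const _) (.of_forall fun _ ↦ by fun_prop)

variable [IsProbabilityMeasure F]

lemma outputDensity_le_φ_zero (y : ℝ) : outputDensity F y ≤ φ 0 := by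
  simpa [outputDensity] using
    integral_mono (integrable_φ_sub y) (integrable_const (μ := F) _) fun s ↦ φ_le_φ_zero _

lemma φ_abs_add_le_outputDensity (hF : ∀ᵐ s ∂F, s ∈ Icc (-A) A) (y : ℝ) :
    φ (|y| + A) ≤ outputDensity F y := by
  have hbound : ∀ᵐ s ∂F, φ (|y| + A) ≤ φ (y - s) := hF.mono fun s hs ↦ by
    have hs' : |s| ≤ A := abs_le.2 hs
    refine φ_le_φ_of_abs_le ?_
    rw [abs_of_nonneg (show 0 ≤ |y| + A by linarith [abs_nonneg y, abs_nonneg s])]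
    linarith [abs_sub y s]
  simpa [outputDensity] using integral_mono_ae (integrable_const _) (integrable_φ_sub y) hbound

lemma outputDensity_pos (hF : ∀ᵐ s ∂F, s ∈ Icc (-A) A) (y : ℝ) : 0 < outputDensity F y :=
  (φ_pos _).trans_le (φ_abs_add_le_outputDensity hF y)

lemma outputDensity_le_φ_sub (hF : ∀ᵐ s ∂F, s ≤ A) {y : ℝ} (hy : A ≤ y) :
    outputDensity F y ≤ φ (y - A) := by
  have hbound : ∀ᵐ s ∂F, φ (y - s) ≤ φ (y - A) := hF.mono fun s hs ↦ by
    refine φ_le_φ_of_abs_le ?_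
    rw [abs_of_nonneg (by linarith), abs_of_nonneg (by linarith)]
    linarith
  simpa [outputDensity] using integral_mono_ae (integrable_φ_sub y) (integrable_const _) hbound

lemma abs_log_outputDensity_le (hF : ∀ᵐ s ∂F, s ∈ Icc (-A) A) (y : ℝ) :
    |log (outputDensity F y)| ≤ (|y| + A) ^ 2 / 2 + |log (φ 0)| := by
  have hupper := log_le_log (outputDensity_pos hF y) (outputDensity_le_φ_zero y)
  have hlower := log_le_log (φ_pos _) (φ_abs_add_le_outputDensity hF y)
  rw [log_φ] at hlower
  rw [abs_le]
  constructor <;> linarith [neg_abs_le (log (φ 0)), le_abs_self (log (φ 0)),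
    sq_nonneg (|y| + A)]

lemma log_outputDensity_le (hF : ∀ᵐ s ∂F, s ∈ Icc (-A) A) {y : ℝ} (hy : A ≤ y) :
    log (outputDensity F y) ≤ log (φ 0) - (y - A) ^ 2 / 2 := by
  rw [← log_φ]
  exact log_le_log (outputDensity_pos hF y) (outputDensity_le_φ_sub (hF.mono fun _ h ↦ h.2) hy)

lemma integrable_φ_mul_log_outputDensity (hF : ∀ᵐ s ∂F, s ∈ Icc (-A) A) (t : ℝ) :
    Integrable fun u ↦ φ u * log (outputDensity F (u + t)) := by
  have hcont : Continuous fun y ↦ log (outputDensity F y) :=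
    continuous_outputDensity.log fun y ↦ (outputDensity_pos hF y).ne'
  refine (integrable_φ_mul_sq_add ((|t| + A) ^ 2 + |log (φ 0)|)).mono'
    (continuous_φ.mul (hcont.comp (continuous_add_const t))).aestronglyMeasurable
    (.of_forall fun u ↦ ?_)
  rw [norm_mul, norm_of_nonneg (φ_pos u).le, norm_eq_abs]
  refine mul_le_mul_of_nonneg_left ((abs_log_outputDensity_le hF _).trans ?_) (φ_pos u).le
  obtain ⟨s, hs⟩ := hF.exists
  have hA : 0 ≤ A := by linarith [hs.1, hs.2]
  have hsq : (|u + t| + A) ^ 2 ≤ (|u| + (|t| + A)) ^ 2 :=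
    pow_le_pow_left₀ (by positivity) (by linarith [abs_add_le u t]) 2
  nlinarith [sq_abs u, sq_nonneg (|u| - (|t| + A))]

lemma integral_φ_sub_mul_log_outputDensity_le (hF : ∀ᵐ s ∂F, s ∈ Icc (-A) A) {t : ℝ}
    (ht : A ≤ t) : ∫ y, φ (y - t) * log (outputDensity F y) ≤ log (φ 0) - (t - A) ^ 2 / 4 := by
  rw [← integral_add_right_eq_self _ t]
  simp only [add_sub_cancel_right]
  have hpointwise : ∀ u, φ u * log (outputDensity F (u + t)) ≤
      log (φ 0) * φ u - (t - A) ^ 2 / 2 * (Ioi 0).indicator φ u := by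
    intro u
    by_cases hu : u ∈ Ioi 0
    · have hlog := log_outputDensity_le hF (show A ≤ u + t by linarith [mem_Ioi.1 hu])
      have hsq : (t - A) ^ 2 ≤ (u + t - A) ^ 2 := by nlinarith [mem_Ioi.1 hu]
      rw [indicator_of_mem hu]
      nlinarith [φ_pos u]
    · rw [indicator_of_notMem hu, mul_zero, sub_zero, mul_comm]
      exact mul_le_mul_of_nonneg_right (log_le_log (outputDensity_pos hF _)
        (outputDensity_le_φ_zero _)) (φ_pos u).le
  have hindicator : Integrable ((Ioi 0).indicator φ) := integrable_φ.indicator measurableSet_Ioi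
  calc ∫ u, φ u * log (outputDensity F (u + t))
      ≤ ∫ u, (log (φ 0) * φ u - (t - A) ^ 2 / 2 * (Ioi 0).indicator φ u) :=
        integral_mono (integrable_φ_mul_log_outputDensity hF t)
          ((integrable_φ.const_mul _).sub (hindicator.const_mul _)) hpointwise
    _ = log (φ 0) - (t - A) ^ 2 / 4 := by
        rw [integral_sub (integrable_φ.const_mul _) (hindicator.const_mul _), integral_const_mul,
          integral_const_mul, integral_indicator measurableSet_Ioi, integral_φ,
          setIntegral_Ioi_zero_φ]
        ring

end outputDensity

theorem no_constant_smoothed_logdensity_general (A : ℝ)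
    (F : Measure ℝ) [IsProbabilityMeasure F] (hF : F (Icc (-A) A) = 1) :
    ¬ ∃ K : ℝ, ∀ t : ℝ,
        ∫ y : ℝ, φ (y - t) * Real.log (∫ s, φ (y - s) ∂F) = K := by
  rintro ⟨K, hK⟩
  have hFA : ∀ᵐ s ∂F, s ∈ Icc (-A) A :=
    mem_ae_iff.2 ((prob_compl_eq_zero_iff measurableSet_Icc).2 hF)
  set C := log (φ 0)
  set t := A + 2 * (|C - K| + 1)
  have hKt : K ≤ C - (t - A) ^ 2 / 4 :=
    (hK t).symm.trans_le <| integral_φ_sub_mul_log_outputDensity_le hFA <| by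
      linarith [abs_nonneg (C - K)]
  nlinarith [le_abs_self (C - K), abs_nonneg (C - K)]

/-- There is no probability measure `F` supported on a bounded interval `[−A,A]`
whose Gaussian-smoothed log output density `∫ φ(y−t) log f(y;F) dy` is constant in `t`. -/
theorem no_constant_smoothed_logdensity (A : ℝ) (hA : 0 < A)
    (F : Measure ℝ) [IsProbabilityMeasure F] (hF : F (Icc (-A) A) = 1) :
    ¬ ∃ K : ℝ, ∀ t : ℝ,
        ∫ y : ℝ, φ (y - t) * Real.log (∫ s, φ (y - s) ∂F) = K :=
  no_constant_smoothed_logdensity_general A F hF
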